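/- The ring homomorphism from the one-variable Laurent polynomial ring ℤ[t,t⁻¹] to T = ℤ[p,p⁻¹,q,q⁻¹]/((p−1)(p−q),(q−1)(p−q)) determined by sending t to q is injective. -/

import Mathlib

set_option maxRecDepth 4000

/-!  The ring `T = ℤ[p,p⁻¹,q,q⁻¹] / ((p−1)(p−q), (q−1)(p−q))`.

We realize the two-variable Laurent polynomial ring `ℤ[p,p⁻¹,q,q⁻¹]` as the
iterated Laurent polynomial ring `(ℤ[T;T⁻¹])[T;T⁻¹]`, where the inner variable
is `p` and the outer variable is `q`.  -/

noncomputable section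

/-- The two-variable Laurent polynomial ring `ℤ[p,p⁻¹,q,q⁻¹]`. -/
abbrev L : Type := LaurentPolynomial (LaurentPolynomial ℤ)

/-- The variable `p` (the inner variable). -/
def pL : L := LaurentPolynomial.C (LaurentPolynomial.T 1)

/-- The variable `q` (the outer variable). -/
def qL : L := LaurentPolynomial.T 1

/-- The defining ideal `((p−1)(p−q), (q−1)(p−q))`. -/
def idealI : Ideal L := Ideal.span {(pL - 1) * (pL - qL), (qL - 1) * (pL - qL)}

/-- The ring `T = ℤ[p,p⁻¹,q,q⁻¹] / ((p−1)(p−q), (q−1)(p−q))`. -/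
abbrev TT : Type := L ⧸ idealI

/-- The image of `p` in `T`. -/
def pT : TT := Ideal.Quotient.mk idealI pL

/-- The image of `q` in `T`. -/
def qT : TT := Ideal.Quotient.mk idealI qL


/-! Setting `p = q` kills both relations, since each has the factor `p - q`. So `T` maps onto
`ℤ[t,t⁻¹]` by `p, q ↦ t`, and this is a left inverse of any ring map `ℤ[t,t⁻¹] → T` with
`t ↦ q`, because a ring map out of `ℤ[t,t⁻¹]` is determined by the image of `t`. -/

namespace LaurentPolynomial

theorem ringHom_ext {R S : Type*} [CommSemiring R] [CommSemiring S] {f g : R[T;T⁻¹] →+* S}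
    (hC : ∀ r, f (C r) = g (C r)) (hT : f (T 1) = g (T 1)) : f = g := by
  refine IsLocalization.ringHom_ext (Submonoid.powers (Polynomial.X : Polynomial R)) <|
    Polynomial.ringHom_ext (fun r => ?_) ?_
  · simpa [algebraMap_eq_toLaurent, Polynomial.toLaurent_C] using hC r
  · simpa [algebraMap_eq_toLaurent, Polynomial.toLaurent_X] using hT

theorem ringHom_ext_int {S : Type*} [CommRing S] {f g : ℤ[T;T⁻¹] →+* S}
    (hT : f (T 1) = g (T 1)) : f = g :=
  ringHom_ext (fun r => by simp only [eq_intCast C, map_intCast]) hT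

end LaurentPolynomial

open LaurentPolynomial

def diagSpecialize : L →+* ℤ[T;T⁻¹] :=
  eval₂ (eval₂ (Int.castRingHom _) (isUnit_T 1).unit) (isUnit_T 1).unit

theorem diagSpecialize_pL : diagSpecialize pL = T 1 := by
  simp [diagSpecialize, pL]

theorem diagSpecialize_qL : diagSpecialize qL = T 1 := by
  simp [diagSpecialize, qL]

theorem idealI_le_ker_diagSpecialize : idealI ≤ RingHom.ker diagSpecialize := by
  rw [idealI, Ideal.span_le]
  rintro x (rfl | rfl) <;> simp [diagSpecialize_pL, diagSpecialize_qL]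

def quotientDiagSpecialize : TT →+* ℤ[T;T⁻¹] :=
  Ideal.Quotient.lift idealI diagSpecialize idealI_le_ker_diagSpecialize

theorem quotientDiagSpecialize_qT : quotientDiagSpecialize qT = T 1 :=
  (Ideal.Quotient.lift_mk _ _ _).trans diagSpecialize_qL

/-- The ring homomorphism `ℤ[t,t⁻¹] → T` determined by `t ↦ q` is
injective. -/
theorem laurent_to_T_injective
    (f : LaurentPolynomial ℤ →+* TT) (hf : f (LaurentPolynomial.T 1) = qT) :
    Function.Injective f := by
  have hleft : quotientDiagSpecialize.comp f = RingHom.id _ :=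
    ringHom_ext_int (by rw [RingHom.comp_apply, hf, quotientDiagSpecialize_qT, RingHom.id_apply])
  exact Function.LeftInverse.injective (RingHom.congr_fun hleft)
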